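/- arXiv:2206.11546 — 3 statements merged into one kernel-verified Lean document; each statement's English description precedes it below -/
import Mathlib

section
/- Let r > 0, c ∈ ℝ^d nonzero, and A ∈ ℝ^{d×d} symmetric positive-definite. If r·λ_max(A^{-1}) ≤ ‖c‖², then for every x in the hyperellipsoid E(r,c,A) = {x : (x−c)ᵀA(x−c) ≤ r} with x ≠ 0, the inner product ⟨c/‖c‖, x/‖x‖⟩ is at least sqrt(1 − (r/‖c‖²)·λ_max(A^{-1})). -/
/-!
By the Rayleigh bound `λ_min ‖y‖² ≤ yᵀ A y`, the ellipsoid lies in the ball of squared radius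
`s = r / λ_min` about `c`. When `s ≤ ‖c‖²`, that ball lies in the cone about `c` cut out by the
tangents from the origin, whose half-angle has cosine `√(1 - s / ‖c‖²)`: expanding
`‖x - c‖² ≤ s` gives `2 ⟨c, x⟩ ≥ (‖c‖² - s) + ‖x‖² ≥ 2 √(‖c‖² - s) ‖x‖` by AM-GM.
-/

open Matrix

open scoped MatrixOrder ComplexOrder

namespace Matrix

variable {n 𝕜 : Type*} [Fintype n] [RCLike 𝕜] {A : Matrix n n 𝕜}

theorem IsHermitian.iInf_eigenvalues_mul_le_re_dotProduct_mulVec [DecidableEq n]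
    (hA : A.IsHermitian) (y : n → 𝕜) :
    (⨅ i, hA.eigenvalues i) * RCLike.re (star y ⬝ᵥ y) ≤ RCLike.re (star y ⬝ᵥ A *ᵥ y) := by
  have hle : algebraMap ℝ (Matrix n n 𝕜) (⨅ i, hA.eigenvalues i) ≤ A := by
    refine algebraMap_le_of_le_spectrum (fun μ hμ => ?_) hA.isSelfAdjoint
    rw [hA.spectrum_real_eq_range_eigenvalues] at hμ
    obtain ⟨i, rfl⟩ := hμ
    exact ciInf_le (Finite.bddBelow_range _) i
  simpa [sub_mulVec, dotProduct_sub, Algebra.algebraMap_eq_smul_one, smul_mulVec, RCLike.smul_re]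
    using (le_iff.mp hle).re_dotProduct_nonneg y

theorem PosDef.iInf_eigenvalues_pos [DecidableEq n] [Nonempty n] (hA : A.PosDef) :
    0 < ⨅ i, hA.isHermitian.eigenvalues i := by
  obtain ⟨i, hi⟩ := exists_eq_ciInf_of_finite (f := hA.isHermitian.eigenvalues)
  exact hi ▸ hA.eigenvalues_pos i

end Matrix

section BallCone

variable {ι : Type*} [Fintype ι] {c x : ι → ℝ} {s : ℝ}

theorem dotProduct_self_pos {v : ι → ℝ} (hv : v ≠ 0) : 0 < v ⬝ᵥ v := by
  simpa using dotProduct_star_self_pos_iff.mpr hv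

theorem sqrt_sub_mul_sqrt_le_dotProduct (hx : (x - c) ⬝ᵥ (x - c) ≤ s) (hs : s ≤ c ⬝ᵥ c) :
    √(c ⬝ᵥ c - s) * √(x ⬝ᵥ x) ≤ c ⬝ᵥ x := by
  have hexpand : (x - c) ⬝ᵥ (x - c) = x ⬝ᵥ x - 2 * (c ⬝ᵥ x) + c ⬝ᵥ c := by
    simp only [sub_dotProduct, dotProduct_sub, dotProduct_comm x c]
    ring
  have hxx : 0 ≤ x ⬝ᵥ x := by simpa using dotProduct_star_self_nonneg x
  have hamgm := two_mul_le_add_sq (√(c ⬝ᵥ c - s)) (√(x ⬝ᵥ x))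
  rw [Real.sq_sqrt (sub_nonneg.mpr hs), Real.sq_sqrt hxx] at hamgm
  linarith

theorem sqrt_one_sub_div_le_dotProduct_div (hc : c ≠ 0) (hx0 : x ≠ 0)
    (hx : (x - c) ⬝ᵥ (x - c) ≤ s) (hs : s ≤ c ⬝ᵥ c) :
    √(1 - s / (c ⬝ᵥ c)) ≤ c ⬝ᵥ x / (√(c ⬝ᵥ c) * √(x ⬝ᵥ x)) := by
  have hcc := dotProduct_self_pos hc
  have hsqrt : √(1 - s / (c ⬝ᵥ c)) = √(c ⬝ᵥ c - s) / √(c ⬝ᵥ c) := by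
    rw [← Real.sqrt_div' _ hcc.le, sub_div, div_self hcc.ne']
  rw [hsqrt, div_mul_eq_div_div_swap, div_le_div_iff_of_pos_right (by positivity),
    le_div_iff₀ (Real.sqrt_pos.mpr (dotProduct_self_pos hx0))]
  exact sqrt_sub_mul_sqrt_le_dotProduct hx hs

end BallCone

theorem stmt_1_general {d : ℕ} (r : ℝ) (c : Fin d → ℝ) (hc : c ≠ 0)
    (A : Matrix (Fin d) (Fin d) ℝ) (hApd : A.PosDef)
    (hrc : r * (⨅ i, hApd.1.eigenvalues i)⁻¹ ≤ c ⬝ᵥ c)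
    (x : Fin d → ℝ) (hx0 : x ≠ 0) (hx : (x - c) ⬝ᵥ A.mulVec (x - c) ≤ r) :
    Real.sqrt (1 - r / (c ⬝ᵥ c) * (⨅ i, hApd.1.eigenvalues i)⁻¹)
      ≤ (c ⬝ᵥ x) / (Real.sqrt (c ⬝ᵥ c) * Real.sqrt (x ⬝ᵥ x)) := by
  obtain ⟨i, -⟩ := Function.ne_iff.mp hc
  have : Nonempty (Fin d) := ⟨i⟩
  have hrayleigh := hApd.isHermitian.iInf_eigenvalues_mul_le_re_dotProduct_mulVec (x - c)
  simp only [star_trivial, RCLike.re_to_real] at hrayleigh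
  have hball : (x - c) ⬝ᵥ (x - c) ≤ r * (⨅ i, hApd.1.eigenvalues i)⁻¹ := by
    rw [← div_eq_mul_inv, le_div_iff₀ hApd.iInf_eigenvalues_pos]
    linarith
  rw [div_mul_eq_mul_div]
  exact sqrt_one_sub_div_le_dotProduct_div hc hx0 hball hrc

/-- if `r·λ_max(A⁻¹) ≤ ‖c‖²` then every nonzero point `x` of the
hyperellipsoid `E(r,c,A)` satisfies `⟨c/‖c‖, x/‖x‖⟩ ≥ √(1 - (r/‖c‖²)λ_max(A⁻¹))`. -/
theorem stmt_1 {d : ℕ} (r : ℝ) (hr : 0 < r) (c : Fin d → ℝ) (hc : c ≠ 0)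
    (A : Matrix (Fin d) (Fin d) ℝ) (hA : A.IsSymm) (hApd : A.PosDef)
    (hrc : r * (⨅ i, hApd.1.eigenvalues i)⁻¹ ≤ c ⬝ᵥ c)
    (x : Fin d → ℝ) (hx0 : x ≠ 0) (hx : (x - c) ⬝ᵥ A.mulVec (x - c) ≤ r) :
    Real.sqrt (1 - r / (c ⬝ᵥ c) * (⨅ i, hApd.1.eigenvalues i)⁻¹)
      ≤ (c ⬝ᵥ x) / (Real.sqrt (c ⬝ᵥ c) * Real.sqrt (x ⬝ᵥ x)) :=
  stmt_1_general r c hc A hApd hrc x hx0 hx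
end

section
/- Let Z = (W + λ)² with W standard Gaussian and λ ≥ 0. Then for every t > 0, P(Z ≤ t²·(1+λ²)) ≤ 7^{1/4} · t. -/
/-!
The event is the closed ball of radius `c = t √(1 + λ²)` around `-λ`, so its probability is at
most `2c` times the largest value of the normal density on that ball. Only `t < 7^{-1/4}` needs an
argument. For `λ ≤ 1.7` the crude bound `1/√(2π)` on the density suffices. For larger `λ` the ball
stays at distance at least `0.385 λ - 0.182` from the origin, and the Gaussian factor
`exp (-(0.385 λ - 0.182)² / 2)` beats the linear growth of `c` in `λ`; comparing the squares
reduces this to a polynomial inequality via the cubic Taylor bound for `exp`.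
-/

open MeasureTheory ProbabilityTheory Real

lemma gaussianPDFReal_le_of_le_abs {μ m x : ℝ} (v : NNReal) (hm : 0 ≤ m) (hmx : m ≤ |x - μ|) :
    gaussianPDFReal μ v x ≤ (√(2 * π * v))⁻¹ * exp (-m ^ 2 / (2 * v)) := by
  have hsq : m ^ 2 ≤ (x - μ) ^ 2 := by
    rw [← sq_abs (x - μ)]
    exact pow_le_pow_left₀ hm hmx 2
  rw [gaussianPDFReal]
  gcongr

lemma gaussianReal_le_ofReal_mul_volume {μ M : ℝ} {v : NNReal} (hv : v ≠ 0) {s : Set ℝ}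
    (hM : ∀ x ∈ s, gaussianPDFReal μ v x ≤ M) :
    gaussianReal μ v s ≤ ENNReal.ofReal M * volume s := by
  rw [gaussianReal_apply μ hv, ← setLIntegral_const]
  exact setLIntegral_mono measurable_const fun x hx => ENNReal.ofReal_le_ofReal (hM x hx)

lemma gaussianReal_closedBall_toReal_le {μ b c : ℝ} {v : NNReal} (hv : v ≠ 0) (hc : 0 ≤ c) :
    (gaussianReal μ v (Metric.closedBall b c)).toReal
      ≤ 2 * c * ((√(2 * π * v))⁻¹ * exp (-max 0 (|b - μ| - c) ^ 2 / (2 * v))) := by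
  have hM : ∀ x ∈ Metric.closedBall b c, gaussianPDFReal μ v x
      ≤ (√(2 * π * v))⁻¹ * exp (-max 0 (|b - μ| - c) ^ 2 / (2 * v)) := by
    intro x hx
    rw [Metric.mem_closedBall, dist_eq] at hx
    have hdist := abs_sub_abs_le_abs_sub (b - μ) (x - μ)
    rw [sub_sub_sub_cancel_right, abs_sub_comm b x] at hdist
    exact gaussianPDFReal_le_of_le_abs v (le_max_left _ _) (max_le (abs_nonneg _) (by linarith))
  have h := gaussianReal_le_ofReal_mul_volume hv hM
  rw [Real.volume_closedBall] at h
  calc (gaussianReal μ v (Metric.closedBall b c)).toReal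
      ≤ (ENNReal.ofReal _ * ENNReal.ofReal (2 * c)).toReal :=
        ENNReal.toReal_mono (by finiteness) h
    _ = _ := by
        rw [ENNReal.toReal_mul, ENNReal.toReal_ofReal (by positivity),
          ENNReal.toReal_ofReal (by positivity), mul_comm]

lemma setOf_add_sq_le_sq_eq_closedBall {a c : ℝ} (hc : 0 ≤ c) :
    {w : ℝ | (w + a) ^ 2 ≤ c ^ 2} = Metric.closedBall (-a) c := by
  ext w
  rw [Set.mem_ofPred_eq, Metric.mem_closedBall, dist_eq, sub_neg_eq_add, sq_le_sq,
    abs_of_nonneg hc]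

lemma le_seven_rpow_one_div_four : (1.6261 : ℝ) ≤ 7 ^ ((1 : ℝ) / 4) := by
  have h4 : ((7 : ℝ) ^ ((1 : ℝ) / 4)) ^ 4 = 7 := by
    rw [← rpow_natCast, ← rpow_mul (by norm_num)]
    norm_num
  exact (pow_le_pow_iff_left₀ (by norm_num) (by positivity) four_ne_zero).1 (by rw [h4]; norm_num)

lemma one_add_add_sq_div_two_add_cube_div_six_le_exp {q : ℝ} (hq : 0 ≤ q) :
    1 + q + q ^ 2 / 2 + q ^ 3 / 6 ≤ exp q := by
  have h := Real.sum_le_exp_of_nonneg hq 4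
  norm_num [Finset.sum_range_succ, Nat.factorial] at h
  linarith

lemma four_mul_one_add_sq_le_mul_exp_sq {lam : ℝ} (hlam : 1.7 ≤ lam) :
    4 * (1 + lam ^ 2) ≤ 16.61 * exp ((0.385 * lam - 0.182) ^ 2) := by
  have hexp := one_add_add_sq_div_two_add_cube_div_six_le_exp (sq_nonneg (0.385 * lam - 0.182))
  nlinarith [sq_nonneg (lam - 2.7), sq_nonneg ((lam - 2.7) * (lam - 2.7)),
    sq_nonneg (lam * (lam - 2.7)), sq_nonneg (lam * lam - 7), sq_nonneg lam,
    sq_nonneg ((lam - 2.7) * (lam - 2.7) * (lam - 2.7))]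

lemma four_mul_one_add_sq_le_mul_exp {lam t : ℝ} (hlam : 0 ≤ lam) (ht : t ≤ 0.615) :
    4 * (1 + lam ^ 2) ≤ 16.61 * exp (max 0 (lam - t * √(1 + lam ^ 2)) ^ 2) := by
  rcases le_or_gt lam 1.7 with hsmall | hlarge
  · have : 1 ≤ exp (max 0 (lam - t * √(1 + lam ^ 2)) ^ 2) := one_le_exp (sq_nonneg _)
    nlinarith
  · have hs : √(1 + lam ^ 2) ≤ lam + 0.295 := sqrt_le_iff.2 ⟨by linarith, by nlinarith⟩
    have hts : t * √(1 + lam ^ 2) ≤ 0.615 * (lam + 0.295) := by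
      nlinarith [mul_nonneg (sub_nonneg.2 ht) (sqrt_nonneg (1 + lam ^ 2))]
    have hm : 0.385 * lam - 0.182 ≤ max 0 (lam - t * √(1 + lam ^ 2)) :=
      le_max_of_le_right (by linarith)
    calc 4 * (1 + lam ^ 2) ≤ 16.61 * exp ((0.385 * lam - 0.182) ^ 2) :=
          four_mul_one_add_sq_le_mul_exp_sq hlarge.le
      _ ≤ 16.61 * exp (max 0 (lam - t * √(1 + lam ^ 2)) ^ 2) := by
          gcongr
          linarith

lemma two_mul_sqrt_one_add_sq_mul_exp_le {lam t r : ℝ} (hlam : 0 ≤ lam) (hr : 1.6261 ≤ r)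
    (hrt : r * t < 1) :
    2 * √(1 + lam ^ 2) * exp (-max 0 (lam - t * √(1 + lam ^ 2)) ^ 2 / 2) ≤ r * √(2 * π) := by
  have h := four_mul_one_add_sq_le_mul_exp hlam (t := t) (by nlinarith)
  set m := max 0 (lam - t * √(1 + lam ^ 2))
  have hconst : 16.61 ≤ r ^ 2 * (2 * π) := by nlinarith [pi_gt_d4]
  have hexp : exp (-m ^ 2 / 2) ^ 2 = (exp (m ^ 2))⁻¹ := by
    rw [← exp_nat_mul, ← exp_neg]
    ring_nf
  rw [← pow_le_pow_iff_left₀ (by positivity) (by positivity) two_ne_zero, mul_pow, mul_pow, hexp,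
    mul_pow, sq_sqrt (by positivity), sq_sqrt (by positivity), ← div_eq_mul_inv,
    div_le_iff₀ (exp_pos _)]
  nlinarith [mul_le_mul_of_nonneg_right hconst (exp_pos (m ^ 2)).le]

/-- small-ball condition: for `Z = (W + λ)²` with `W` standard Gaussian
and `λ ≥ 0`, for every `t > 0`, `P(Z ≤ t²(1+λ²)) ≤ 7^{1/4} t`. -/
theorem stmt_3 (lam t : ℝ) (hlam : 0 ≤ lam) (ht : 0 < t) :
    ((gaussianReal 0 1) {w | (w + lam) ^ 2 ≤ t ^ 2 * (1 + lam ^ 2)}).toReal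
      ≤ (7 : ℝ) ^ ((1 : ℝ) / 4) * t := by
  set r : ℝ := 7 ^ ((1 : ℝ) / 4)
  rcases le_or_gt 1 (r * t) with hrt | hrt
  · exact (measureReal_def _ _ ▸ measureReal_le_one).trans hrt
  set s := √(1 + lam ^ 2)
  set m := max 0 (lam - t * s)
  have hball : {w : ℝ | (w + lam) ^ 2 ≤ t ^ 2 * (1 + lam ^ 2)}
      = Metric.closedBall (-lam) (t * s) := by
    rw [← setOf_add_sq_le_sq_eq_closedBall (by positivity), mul_pow, sq_sqrt (by positivity)]
  have hprob := gaussianReal_closedBall_toReal_le (μ := 0) (b := -lam) one_ne_zero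
    (by positivity : 0 ≤ t * s)
  rw [sub_zero, abs_neg, abs_of_nonneg hlam, NNReal.coe_one, mul_one, mul_one] at hprob
  have hconst := two_mul_sqrt_one_add_sq_mul_exp_le hlam le_seven_rpow_one_div_four hrt
  calc _ ≤ 2 * (t * s) * ((√(2 * π))⁻¹ * exp (-m ^ 2 / 2)) := hball ▸ hprob
    _ = t * (2 * s * exp (-m ^ 2 / 2)) / √(2 * π) := by ring
    _ ≤ t * (r * √(2 * π)) / √(2 * π) := by gcongr
    _ = r * t := by field_simp
end

section
/- Let Y = ⟨β, X⟩ with X ~ N(μ, σ_X² I_d) conditional on sensitive attribute taking value s (with β = β_s, μ = μ_s). Then the conditional CDF of Y given S = s is F(t) = Φ((t − ⟨β_s, μ_s⟩)/(σ_X‖β_s‖)) and its inverse is F^{-1}(p) = σ_X‖β_s‖·Φ^{-1}(p) + ⟨β_s, μ_s⟩, where Φ is the standard normal CDF. Consequently, the composition (Σ_{s'} p_{s'} F_{s'}^{-1}) ∘ F_s applied to ⟨β_s, x⟩ equals (Σ_{s'} p_{s'}‖β_{s'}‖)·⟨β_s/‖β_s‖, x − μ_s⟩ + Σ_{s'} p_{s'}⟨β_{s'},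 μ_{s'}⟩. -/
/-!
Under `P s` the coordinates of `X` are independent `N(μ_s i, σ²)`, so a computation with
characteristic functions shows that `⟪β s, X⟫` has law `N(⟪β s, μ s⟫, σ²‖β s‖²)`: it is the image
of `N(0, 1)` under the increasing affine map `z ↦ σ‖β s‖ z + ⟪β s, μ s⟫`. Its CDF and generalized
inverse are therefore `Φ` and `Φ⁻¹` transported through this map. As `Φ` is strictly increasing,
`Φ⁻¹ ∘ Φ = id`, so `F_{s'}⁻¹ ∘ F_s` sends a point to the point of group `s'` with the same
standardized score, and averaging over `s'` gives the formula.
-/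

open MeasureTheory ProbabilityTheory
open scoped RealInnerProductSpace

/-- The standard normal CDF `Φ`. -/
noncomputable def stdGaussCDF (t : ℝ) : ℝ := ((gaussianReal 0 1) (Set.Iic t)).toReal

/-- The (generalized) inverse standard normal CDF `Φ⁻¹`. -/
noncomputable def stdGaussCDFInv (p : ℝ) : ℝ := sInf {y | p ≤ stdGaussCDF y}

open Set Filter
open scoped NNReal

lemma csInf_setOf_div_sub_mem {S : Set ℝ} (hne : S.Nonempty) (hbdd : BddBelow S) {c : ℝ}
    (hc : 0 < c) (m : ℝ) : sInf {y | (y - m) / c ∈ S} = c * sInf S + m := by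
  have himage : {y | (y - m) / c ∈ S} = (fun z ↦ c * z + m) '' S := by
    ext y
    constructor
    · intro hy
      exact ⟨(y - m) / c, hy, by field_simp; ring⟩
    · rintro ⟨z, hz, rfl⟩
      simpa [hc.ne'] using hz
  rw [himage]
  exact (Monotone.map_csInf_of_continuousAt (f := fun z ↦ c * z + m) (by fun_prop)
    (fun _ _ h ↦ by dsimp only; nlinarith) hne hbdd).symm

namespace ProbabilityTheory

lemma nonempty_setOf_le_cdf (μ : Measure ℝ) {q : ℝ} (hq : q < 1) :
    {y | q ≤ cdf μ y}.Nonempty :=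
  ((tendsto_cdf_atTop μ).eventually_const_le hq).exists

lemma bddBelow_setOf_le_cdf (μ : Measure ℝ) {q : ℝ} (hq : 0 < q) :
    BddBelow {y | q ≤ cdf μ y} := by
  obtain ⟨a, ha⟩ := eventually_atBot.1 ((tendsto_cdf_atBot μ).eventually_lt_const hq)
  exact ⟨a, fun y hy ↦ le_of_not_ge fun hya ↦ (ha y hya).not_ge hy⟩

lemma map_sum_pi_gaussianReal {ι : Type*} [Fintype ι] (m : ι → ℝ) (v : ι → ℝ≥0) :
    (Measure.pi fun i ↦ gaussianReal (m i) (v i)).map (fun x ↦ ∑ i, x i)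
      = gaussianReal (∑ i, m i) (∑ i, v i) := by
  refine Measure.ext_of_charFun ?_
  ext t
  rw [charFun_map_sum_pi_eq_prod, Finset.prod_apply]
  simp only [charFun_gaussianReal, ← Complex.exp_sum]
  congr 1
  push_cast
  rw [Finset.sum_sub_distrib, Finset.mul_sum, Finset.sum_mul, Finset.sum_mul, Finset.sum_div]

lemma map_inner_pi_gaussianReal {ι : Type*} [Fintype ι] (β m : EuclideanSpace ℝ ι) (v : ℝ≥0) :
    ((Measure.pi fun i ↦ gaussianReal (m i) v).map (EuclideanSpace.equiv ι ℝ).symm).map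
        (fun x ↦ ⟪β, x⟫) = gaussianReal ⟪β, m⟫ (‖β‖₊ ^ 2 * v) := by
  have hinner : (fun x ↦ ⟪β, x⟫) ∘ (EuclideanSpace.equiv ι ℝ).symm
      = (fun y ↦ ∑ i, y i) ∘ (fun x i ↦ β i * x i) := by
    ext x
    simp [PiLp.inner_apply, mul_comm]
  rw [Measure.map_map (by fun_prop) (by fun_prop), hinner,
    ← Measure.map_map (by fun_prop) (by fun_prop),
    Measure.pi_map_pi (fun i ↦ (measurable_const_mul _).aemeasurable)]
  simp only [gaussianReal_map_const_mul, map_sum_pi_gaussianReal]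
  congr 1
  · simp [PiLp.inner_apply, mul_comm]
  · ext
    push_cast
    rw [← Finset.sum_mul, ← EuclideanSpace.real_norm_sq_eq]

lemma gaussianReal_eq_map_gaussianReal_zero_one (m c : ℝ) :
    gaussianReal m (.mk (c ^ 2) (sq_nonneg c)) = (gaussianReal 0 1).map (fun z ↦ c * z + m) := by
  rw [show (fun z ↦ c * z + m) = (· + m) ∘ (c * ·) from rfl,
    ← Measure.map_map (by fun_prop) (by fun_prop), gaussianReal_map_const_mul,
    gaussianReal_map_add_const, mul_zero, zero_add, mul_one]

end ProbabilityTheory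

lemma gaussianReal_real_Iic_eq_stdGaussCDF (m : ℝ) {c : ℝ} (hc : 0 < c) (t : ℝ) :
    (gaussianReal m (.mk (c ^ 2) (sq_nonneg c))).real (Iic t) = stdGaussCDF ((t - m) / c) := by
  have hpre : (fun z ↦ c * z + m) ⁻¹' Iic t = Iic ((t - m) / c) := by
    ext z
    simp [le_div_iff₀ hc, mul_comm, le_sub_iff_add_le]
  rw [gaussianReal_eq_map_gaussianReal_zero_one, measureReal_def,
    Measure.map_apply (by fun_prop) measurableSet_Iic, hpre, stdGaussCDF]

lemma stdGaussCDF_eq_cdf : stdGaussCDF = cdf (gaussianReal 0 1) :=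
  funext fun t ↦ (cdf_eq_real _ t).symm

lemma strictMono_stdGaussCDF : StrictMono stdGaussCDF := by
  intro a b hab
  have hpos : 0 < gaussianReal 0 1 (Ioc a b) :=
    pos_of_ne_zero fun h ↦ (by simpa using hab : volume (Ioc a b) ≠ 0)
      (gaussianReal_absolutelyContinuous' 0 one_ne_zero h)
  rw [← measure_cdf (gaussianReal 0 1), StieltjesFunction.measure_Ioc, ENNReal.ofReal_pos,
    sub_pos, ← stdGaussCDF_eq_cdf] at hpos
  exact hpos

lemma stdGaussCDF_mem_Ioo (z : ℝ) : stdGaussCDF z ∈ Ioo 0 1 := by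
  have hΦ := stdGaussCDF_eq_cdf ▸ strictMono_stdGaussCDF
  rw [stdGaussCDF_eq_cdf]
  exact ⟨(cdf_nonneg _ (z - 1)).trans_lt (hΦ (sub_one_lt z)),
    (hΦ (lt_add_one z)).trans_le (cdf_le_one _ (z + 1))⟩

lemma stdGaussCDFInv_stdGaussCDF (z : ℝ) : stdGaussCDFInv (stdGaussCDF z) = z := by
  simp_rw [stdGaussCDFInv, strictMono_stdGaussCDF.le_iff_le]
  exact csInf_Ici

theorem stmt_19_general {d M : ℕ} (σ : ℝ) (hσ : 0 < σ)
    (β μ : Fin M → EuclideanSpace ℝ (Fin d)) (hβ : ∀ s, β s ≠ 0)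
    (p : Fin M → ℝ)
    (P : Fin M → Measure (EuclideanSpace ℝ (Fin d)))
    (hP : ∀ s, P s = (Measure.pi fun i => gaussianReal (μ s i) ⟨σ ^ 2, sq_nonneg σ⟩).map
      (EuclideanSpace.equiv (Fin d) ℝ).symm)
    (F : Fin M → ℝ → ℝ) (hF : ∀ s t, F s t = ((P s) {x | ⟪β s, x⟫ ≤ t}).toReal)
    (Finv : Fin M → ℝ → ℝ) (hFinv : ∀ s q, Finv s q = sInf {y | q ≤ F s y}) :
    (∀ s t, F s t = stdGaussCDF ((t - ⟪β s, μ s⟫) / (σ * ‖β s‖)))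
    ∧ (∀ s, ∀ q ∈ Set.Ioo (0 : ℝ) 1,
        Finv s q = σ * ‖β s‖ * stdGaussCDFInv q + ⟪β s, μ s⟫)
    ∧ (∀ s x, (∑ s', p s' * Finv s' (F s ⟪β s, x⟫))
        = (∑ s', p s' * ‖β s'‖) * (⟪β s, x - μ s⟫ / ‖β s‖)
            + ∑ s', p s' * ⟪β s', μ s'⟫) := by
  have hscale (s : Fin M) : 0 < σ * ‖β s‖ := mul_pos hσ (norm_pos_iff.2 (hβ s))
  have hlaw (s : Fin M) : (P s).map (fun x ↦ ⟪β s, x⟫)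
      = gaussianReal ⟪β s, μ s⟫ (.mk ((σ * ‖β s‖) ^ 2) (sq_nonneg _)) := by
    rw [hP]
    refine (map_inner_pi_gaussianReal (β s) (μ s) ⟨σ ^ 2, sq_nonneg σ⟩).trans ?_
    congr 1
    ext
    -- `⟨σ ^ 2, _⟩` in `hP` elaborates at type `{r : ℝ // 0 ≤ r}`, where the `NNReal` coercion
    -- lemmas do not fire.
    change ((‖β s‖₊ ^ 2 * NNReal.mk (σ ^ 2) (sq_nonneg σ) : ℝ≥0) : ℝ) = _
    simp only [NNReal.coe_mul, NNReal.coe_pow, coe_nnnorm, NNReal.coe_mk]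
    ring
  have hcdf (s : Fin M) (t : ℝ) : F s t = stdGaussCDF ((t - ⟪β s, μ s⟫) / (σ * ‖β s‖)) := by
    rw [hF, ← gaussianReal_real_Iic_eq_stdGaussCDF _ (hscale s), ← hlaw, measureReal_def,
      Measure.map_apply (by fun_prop) measurableSet_Iic]
    rfl
  have hquantile (s : Fin M) (q : ℝ) (hq : q ∈ Ioo 0 1) :
      Finv s q = σ * ‖β s‖ * stdGaussCDFInv q + ⟪β s, μ s⟫ := by
    simp only [hFinv, hcdf, stdGaussCDFInv, stdGaussCDF_eq_cdf]
    exact csInf_setOf_div_sub_mem (nonempty_setOf_le_cdf _ hq.2)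
      (bddBelow_setOf_le_cdf _ hq.1) (hscale s) _
  refine ⟨hcdf, hquantile, fun s x ↦ ?_⟩
  have htransport (s' : Fin M) : Finv s' (F s ⟪β s, x⟫)
      = σ * ‖β s'‖ * ((⟪β s, x⟫ - ⟪β s, μ s⟫) / (σ * ‖β s‖)) + ⟪β s', μ s'⟫ := by
    rw [hcdf, hquantile _ _ (stdGaussCDF_mem_Ioo _), stdGaussCDFInv_stdGaussCDF]
  simp only [htransport, inner_sub_right, mul_add, Finset.sum_add_distrib, Finset.sum_mul]
  congr 1
  refine Finset.sum_congr rfl fun s' _ ↦ ?_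
  field_simp

/-- in the linear Gaussian model `Y = ⟨β_s, X⟩`, `X ~ N(μ_s, σ²I)`
conditional on `S = s`: the conditional CDF is
`F_s(t) = Φ((t - ⟨β_s,μ_s⟩)/(σ‖β_s‖))`, its (generalized) inverse is
`F_s⁻¹(p) = σ‖β_s‖Φ⁻¹(p) + ⟨β_s,μ_s⟩`, and consequently
`(Σ_{s'} p_{s'} F_{s'}⁻¹) ∘ F_s(⟨β_s,x⟩)
  = (Σ_{s'} p_{s'}‖β_{s'}‖)⟨β_s/‖β_s‖, x - μ_s⟩ + Σ_{s'} p_{s'}⟨β_{s'},μ_{s'}⟩`. -/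
theorem stmt_19 {d M : ℕ} (σ : ℝ) (hσ : 0 < σ)
    (β μ : Fin M → EuclideanSpace ℝ (Fin d)) (hβ : ∀ s, β s ≠ 0)
    (p : Fin M → ℝ) (hp : ∀ s, 0 ≤ p s) (hps : ∑ s, p s = 1)
    (P : Fin M → Measure (EuclideanSpace ℝ (Fin d)))
    (hP : ∀ s, P s = (Measure.pi fun i => gaussianReal (μ s i) ⟨σ ^ 2, sq_nonneg σ⟩).map
      (EuclideanSpace.equiv (Fin d) ℝ).symm)
    (F : Fin M → ℝ → ℝ) (hF : ∀ s t, F s t = ((P s) {x | ⟪β s, x⟫ ≤ t}).toReal)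
    (Finv : Fin M → ℝ → ℝ) (hFinv : ∀ s q, Finv s q = sInf {y | q ≤ F s y}) :
    (∀ s t, F s t = stdGaussCDF ((t - ⟪β s, μ s⟫) / (σ * ‖β s‖)))
    ∧ (∀ s, ∀ q ∈ Set.Ioo (0 : ℝ) 1,
        Finv s q = σ * ‖β s‖ * stdGaussCDFInv q + ⟪β s, μ s⟫)
    ∧ (∀ s x, (∑ s', p s' * Finv s' (F s ⟪β s, x⟫))
        = (∑ s', p s' * ‖β s'‖) * (⟪β s, x - μ s⟫ / ‖β s‖)
            + ∑ s', p s' * ⟪β s', μ s'⟫) :=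
  stmt_19_general σ hσ β μ hβ p P hP F hF Finv hFinv
end
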